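/- Scaling and translation invariance of the collision expansion coefficients for power-law kernels: suppose B_{ij}(|g|, ς) = |g|^C Σ(ς) for a constant C ∈ ℝ and a nonnegative measurable function Σ on S², and assume all integrals below converge absolutely. Then for every ū ∈ ℝ³, every 𝒯 > 0 and all multi-indices α, λ, κ ∈ ℕ³, A^{ij}_{αλκ}(ū, 𝒯) = 𝒯^{C/2} A^{ij}_{αλκ}(0, 1). -/

import Mathlib

open MeasureTheory Real Function

noncomputable section

/-- `ℝ³` with the Euclidean norm. -/
abbrev E3 : Type := EuclideanSpace ℝ (Fin 3)

/-- The unit sphere `S² ⊆ ℝ³`. -/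
abbrev S2 := Metric.sphere (0 : E3) 1

/-- The surface measure on the unit sphere `S²`. -/
def sphereMeasure : Measure S2 := (volume : Measure E3).toSphere

/-- The Maxwellian `𝓜_{ū,T̄}(v) = (2πT̄)^{-3/2} exp(-|v-ū|²/(2T̄))`. -/
def maxwellian (u : E3) (T : ℝ) (v : E3) : ℝ :=
  (2 * π * T) ^ (-(3 : ℝ) / 2) * Real.exp (-‖v - u‖ ^ 2 / (2 * T))

/-- Partial derivative in the `d`-th coordinate direction. -/
def pd (d : Fin 3) (f : E3 → ℝ) : E3 → ℝ :=
  fun v => fderiv ℝ f v (EuclideanSpace.single d 1)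

/-- The multi-index partial derivative `∂^{|α|}/∂v₁^{α₁}∂v₂^{α₂}∂v₃^{α₃}`. -/
def pdMulti (α : Fin 3 → ℕ) (f : E3 → ℝ) : E3 → ℝ :=
  (pd 0)^[α 0] <| (pd 1)^[α 1] <| (pd 2)^[α 2] f

/-- `|α| = α₁ + α₂ + α₃`. -/
def msum (α : Fin 3 → ℕ) : ℕ := ∑ d, α d

/-- `α! = α₁! α₂! α₃!`. -/
def mfact (α : Fin 3 → ℕ) : ℕ := ∏ d, (α d).factorial

/-- The Hermite polynomial
`H_α^{ū,T̄}(v) = (-1)^{|α|} T̄^{|α|/2} 𝓜_{ū,T̄}(v)⁻¹ ∂^{|α|}𝓜_{ū,T̄}(v)/∂v^α`. -/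
def hermiteH (u : E3) (T : ℝ) (α : Fin 3 → ℕ) (v : E3) : ℝ :=
  (-1 : ℝ) ^ msum α * T ^ ((msum α : ℝ) / 2) * (maxwellian u T v)⁻¹ *
    pdMulti α (maxwellian u T) v

/-- Post-collision velocity
`v' = (mᵢ v + mⱼ v*)/(mᵢ+mⱼ) + (mⱼ/(mᵢ+mⱼ)) |v - v*| ς`. -/
def vPost (mi mj : ℝ) (v vs ς : E3) : E3 :=
  (mi + mj)⁻¹ • (mi • v + mj • vs) + (mj / (mi + mj) * ‖v - vs‖) • ς

/-- Post-collision velocity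
`v'_* = (mᵢ v + mⱼ v*)/(mᵢ+mⱼ) - (mᵢ/(mᵢ+mⱼ)) |v - v*| ς`. -/
def vsPost (mi mj : ℝ) (v vs ς : E3) : E3 :=
  (mi + mj)⁻¹ • (mi • v + mj • vs) - (mi / (mi + mj) * ‖v - vs‖) • ς

/-- The integrand of the collision expansion coefficient `A^{ij}_{αλκ}(ū, 𝒯)`
with general expansion center `ū` and scaling factor `𝒯`, `ζᵢ = 𝒯/mᵢ`,
`ζⱼ = 𝒯/mⱼ`; the basis functions are `ℋ_α^{ū,ζ} = H_α^{ū,ζ} 𝓜_{ū,ζ}`. -/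
def AGenIntegrand (B : ℝ → S2 → ℝ) (mi mj : ℝ) (u : E3) (Tc : ℝ)
    (α lam kap : Fin 3 → ℕ) (v vs : E3) (ς : S2) : ℝ :=
  B ‖v - vs‖ ς *
    (hermiteH u (Tc / mi) lam (vPost mi mj v vs (ς : E3)) *
        maxwellian u (Tc / mi) (vPost mi mj v vs (ς : E3)) *
        (hermiteH u (Tc / mj) kap (vsPost mi mj v vs (ς : E3)) *
          maxwellian u (Tc / mj) (vsPost mi mj v vs (ς : E3))) -
      hermiteH u (Tc / mi) lam v * maxwellian u (Tc / mi) v *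
        (hermiteH u (Tc / mj) kap vs * maxwellian u (Tc / mj) vs)) *
    hermiteH u (Tc / mi) α v

/-- The collision expansion coefficient `A^{ij}_{αλκ}(ū, 𝒯)`. -/
def AcoefGen (B : ℝ → S2 → ℝ) (mi mj : ℝ) (u : E3) (Tc : ℝ)
    (α lam kap : Fin 3 → ℕ) : ℝ :=
  (mfact α : ℝ)⁻¹ *
    ∫ v : E3, ∫ vs : E3, ∫ ς : S2, AGenIntegrand B mi mj u Tc α lam kap v vs ς ∂sphereMeasure

section AuxLemmas

lemma maxwellian_smooth (u : E3) (T : ℝ) : ContDiff ℝ (⊤ : ℕ∞) (maxwellian u T) := by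
  unfold maxwellian
  refine contDiff_const.mul (Real.contDiff_exp.comp ?_)
  exact (((contDiff_norm_sq ℝ).comp (contDiff_id.sub contDiff_const)).neg).div_const _

lemma pd_contDiff {f : E3 → ℝ} (hf : ContDiff ℝ (⊤ : ℕ∞) f) (d : Fin 3) :
    ContDiff ℝ (⊤ : ℕ∞) (pd d f) := by
  unfold pd
  exact (hf.fderiv_right (mod_cast le_top)).clm_apply contDiff_const

lemma pd_comp_affine {f : E3 → ℝ} (hf : ContDiff ℝ (⊤ : ℕ∞) f) (d : Fin 3) (c t : ℝ) (a : E3) :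
    pd d (fun v => c * f (a + t • v)) = fun w => (c * t) * pd d f (a + t • w) := by
  funext w
  have hL : HasFDerivAt (fun v : E3 => a + t • v)
      (t • ContinuousLinearMap.id ℝ E3) w :=
    ((hasFDerivAt_id w).const_smul t).const_add a
  have hfd : HasFDerivAt f (fderiv ℝ f (a + t • w)) (a + t • w) :=
    ((hf.differentiable (by simp)) (a + t • w)).hasFDerivAt
  have hcomp : HasFDerivAt (fun v => f (a + t • v))
      ((fderiv ℝ f (a + t • w)).comp (t • ContinuousLinearMap.id ℝ E3)) w :=
    hfd.comp w hL
  have hmul : HasFDerivAt (fun v => c * f (a + t • v))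
      (c • ((fderiv ℝ f (a + t • w)).comp (t • ContinuousLinearMap.id ℝ E3))) w :=
    hcomp.const_mul c
  show fderiv ℝ (fun v => c * f (a + t • v)) w (EuclideanSpace.single d 1) = _
  rw [hmul.fderiv]
  simp only [ContinuousLinearMap.smul_apply, ContinuousLinearMap.coe_comp',
    Function.comp_apply, ContinuousLinearMap.id_apply, ContinuousLinearMap.map_smul,
    smul_eq_mul]
  unfold pd; ring

lemma pd_iter_contDiff {f : E3 → ℝ} (hf : ContDiff ℝ (⊤ : ℕ∞) f) (d : Fin 3) (n : ℕ) :
    ContDiff ℝ (⊤ : ℕ∞) ((pd d)^[n] f) := by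
  induction n generalizing f with
  | zero => exact hf
  | succ n ih => rw [Function.iterate_succ_apply]; exact ih (pd_contDiff hf d)

lemma pd_iter_comp_affine {f : E3 → ℝ} (hf : ContDiff ℝ (⊤ : ℕ∞) f) (d : Fin 3) (n : ℕ)
    (c t : ℝ) (a : E3) :
    (pd d)^[n] (fun v => c * f (a + t • v))
      = fun w => (c * t ^ n) * (pd d)^[n] f (a + t • w) := by
  induction n generalizing f c with
  | zero => simp
  | succ n ih =>
    rw [Function.iterate_succ_apply, Function.iterate_succ_apply,
      pd_comp_affine hf d c t a, ih (pd_contDiff hf d)]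
    funext w; ring

lemma pdMulti_comp_affine {f : E3 → ℝ} (hf : ContDiff ℝ (⊤ : ℕ∞) f) (α : Fin 3 → ℕ)
    (c t : ℝ) (a : E3) :
    pdMulti α (fun v => c * f (a + t • v))
      = fun w => (c * t ^ msum α) * pdMulti α f (a + t • w) := by
  unfold pdMulti
  rw [pd_iter_comp_affine hf 2 (α 2) c t a,
    pd_iter_comp_affine (pd_iter_contDiff hf 2 (α 2)) 1 (α 1) (c * t ^ α 2) t a,
    pd_iter_comp_affine (pd_iter_contDiff (pd_iter_contDiff hf 2 (α 2)) 1 (α 1)) 0 (α 0)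
      (c * t ^ α 2 * t ^ α 1) t a]
  funext w
  have h : msum α = α 0 + α 1 + α 2 := by
    simp [msum, Fin.sum_univ_three]
  rw [h]; ring

end AuxLemmas

section AuxLemmas2

lemma rpow_sq_aux {s : ℝ} (hs : 0 < s) (y : ℝ) :
    ((s ^ 2 : ℝ)) ^ y = s ^ (2 * y) := by
  rw [← Real.rpow_natCast s 2, ← Real.rpow_mul hs.le]
  norm_num

lemma rpow_half_aux (T s : ℝ) (hT : 0 < T) (hs : 0 < s) (n : ℕ) :
    (T / s ^ 2) ^ ((n : ℝ) / 2) = T ^ ((n : ℝ) / 2) * (s⁻¹) ^ n := by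
  rw [Real.div_rpow hT.le (sq_nonneg s), rpow_sq_aux hs, inv_pow,
    show (2 : ℝ) * ((n : ℝ) / 2) = (n : ℝ) by ring, Real.rpow_natCast, div_eq_mul_inv]

lemma prefactor_aux {A s : ℝ} (hA : 0 ≤ A) (hs : 0 < s) :
    (A / s ^ 2) ^ (-(3 : ℝ) / 2) = s ^ 3 * A ^ (-(3 : ℝ) / 2) := by
  rw [Real.div_rpow hA (sq_nonneg s), rpow_sq_aux hs,
    show (2 : ℝ) * (-(3 : ℝ) / 2) = -(3 : ℝ) by ring,
    Real.rpow_neg hs.le, show (3 : ℝ) = ((3 : ℕ) : ℝ) by norm_num, Real.rpow_natCast,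
    div_eq_mul_inv, inv_inv]
  ring

lemma maxwellian_fun_eq (u : E3) (T s : ℝ) (hT : 0 < T) (hs : 0 < s) :
    maxwellian u T
      = fun v => (s ^ 3)⁻¹ * maxwellian 0 (T / s ^ 2) (-(s⁻¹ • u) + s⁻¹ • v) := by
  funext v
  simp only [maxwellian]
  have harg : (-(s⁻¹ • u) + s⁻¹ • v) - 0 = s⁻¹ • (v - u) := by
    rw [sub_zero, smul_sub]; abel
  rw [harg, norm_smul, Real.norm_eq_abs, abs_of_pos (inv_pos.mpr hs),
    show 2 * π * (T / s ^ 2) = (2 * π * T) / s ^ 2 by ring,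
    prefactor_aux (by positivity) hs]
  have hexp : -(s⁻¹ * ‖v - u‖) ^ 2 / (2 * (T / s ^ 2)) = -‖v - u‖ ^ 2 / (2 * T) := by
    field_simp
  rw [hexp]
  have h33 : (s : ℝ) ^ 3 * (s ^ 3)⁻¹ = 1 := mul_inv_cancel₀ (pow_ne_zero _ hs.ne')
  linear_combination (-((2 * π * T) ^ (-(3 : ℝ) / 2) *
    Real.exp (-‖v - u‖ ^ 2 / (2 * T)))) * h33

lemma maxwellian_shift_pt (u : E3) (T s : ℝ) (hT : 0 < T) (hs : 0 < s) (x : E3) :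
    maxwellian u T (u + s • x) = (s ^ 3)⁻¹ * maxwellian 0 (T / s ^ 2) x := by
  have harg : -(s⁻¹ • u) + s⁻¹ • (u + s • x) = x := by
    rw [smul_add, smul_smul, inv_mul_cancel₀ hs.ne', one_smul]; abel
  rw [maxwellian_fun_eq u T s hT hs]
  simp only []
  rw [harg]

lemma hermiteH_shift (u : E3) (T s : ℝ) (hT : 0 < T) (hs : 0 < s) (β : Fin 3 → ℕ)
    (x : E3) :
    hermiteH u T β (u + s • x) = hermiteH 0 (T / s ^ 2) β x := by
  have harg : -(s⁻¹ • u) + s⁻¹ • (u + s • x) = x := by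
    rw [smul_add, smul_smul, inv_mul_cancel₀ hs.ne', one_smul]; abel
  unfold hermiteH
  rw [maxwellian_fun_eq u T s hT hs,
    pdMulti_comp_affine (maxwellian_smooth 0 (T / s ^ 2)) β ((s ^ 3)⁻¹) s⁻¹ (-(s⁻¹ • u))]
  simp only []
  rw [harg, rpow_half_aux T s hT hs (msum β), mul_inv, inv_inv]
  have h33 : (s : ℝ) ^ 3 * (s ^ 3)⁻¹ = 1 := mul_inv_cancel₀ (pow_ne_zero _ hs.ne')
  linear_combination ((-1 : ℝ) ^ msum β * T ^ ((msum β : ℝ) / 2) * s⁻¹ ^ msum β *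
    (maxwellian 0 (T / s ^ 2) x)⁻¹ * pdMulti β (maxwellian 0 (T / s ^ 2)) x) * h33

end AuxLemmas2

section AuxLemmas3

lemma norm_shift {s : ℝ} (hs : 0 ≤ s) (u v vs : E3) :
    ‖(u + s • v) - (u + s • vs)‖ = s * ‖v - vs‖ := by
  have h : (u + s • v) - (u + s • vs) = s • (v - vs) := by
    rw [smul_sub]; abel
  rw [h, norm_smul, Real.norm_eq_abs, abs_of_nonneg hs]

lemma vPost_shift (mi mj : ℝ) (hm : mi + mj ≠ 0) {s : ℝ} (hs : 0 ≤ s)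
    (u v vs w : E3) :
    vPost mi mj (u + s • v) (u + s • vs) w = u + s • vPost mi mj v vs w := by
  unfold vPost
  rw [norm_shift hs]
  match_scalars <;> field_simp [hm] <;> ring

lemma vsPost_shift (mi mj : ℝ) (hm : mi + mj ≠ 0) {s : ℝ} (hs : 0 ≤ s)
    (u v vs w : E3) :
    vsPost mi mj (u + s • v) (u + s • vs) w = u + s • vsPost mi mj v vs w := by
  unfold vsPost
  rw [norm_shift hs]
  match_scalars <;> field_simp [hm] <;> ring

lemma integral_shift (g : E3 → ℝ) (u : E3) {s : ℝ} (hs : 0 < s) :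
    ∫ x : E3, g x = (s ^ 3) • ∫ x : E3, g (u + s • x) := by
  have h1 : ∫ x : E3, g (u + s • x)
      = (s ^ Module.finrank ℝ E3)⁻¹ • ∫ x : E3, g (u + x) :=
    MeasureTheory.Measure.integral_comp_smul_of_nonneg (volume : Measure E3) (fun x => g (u + x)) s (hR := hs.le)
  have h2 : ∫ x : E3, g (u + x) = ∫ x : E3, g x :=
    MeasureTheory.integral_add_left_eq_self g u
  rw [h1, h2, finrank_euclideanSpace_fin, smul_smul,
    mul_inv_cancel₀ (pow_ne_zero _ hs.ne'), one_smul]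

end AuxLemmas3

section KeyLemma

lemma AGen_shift (C : ℝ) (Sig : S2 → ℝ) (mi mj : ℝ) (hmi : 0 < mi) (hmj : 0 < mj)
    (u : E3) (Tc : ℝ) (hTc : 0 < Tc) (α lam kap : Fin 3 → ℕ) (v vs : E3) (ς : S2) :
    AGenIntegrand (fun s ς => s ^ C * Sig ς) mi mj u Tc α lam kap
        (u + Real.sqrt Tc • v) (u + Real.sqrt Tc • vs) ς
      = (Tc ^ (C / 2) * (Tc ^ 3)⁻¹) *
        AGenIntegrand (fun s ς => s ^ C * Sig ς) mi mj 0 1 α lam kap v vs ς := by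
  set s := Real.sqrt Tc with hsdef
  have hs : 0 < s := Real.sqrt_pos.mpr hTc
  have hs2 : s ^ 2 = Tc := Real.sq_sqrt hTc.le
  have hm : mi + mj ≠ 0 := by positivity
  have hTi : 0 < Tc / mi := by positivity
  have hTj : 0 < Tc / mj := by positivity
  have hi2 : Tc / mi / s ^ 2 = 1 / mi := by rw [hs2]; field_simp
  have hj2 : Tc / mj / s ^ 2 = 1 / mj := by rw [hs2]; field_simp
  have hMi : ∀ x : E3, maxwellian u (Tc / mi) (u + s • x)
      = (s ^ 3)⁻¹ * maxwellian 0 (1 / mi) x := by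
    intro x; rw [maxwellian_shift_pt u (Tc / mi) s hTi hs x, hi2]
  have hMj : ∀ x : E3, maxwellian u (Tc / mj) (u + s • x)
      = (s ^ 3)⁻¹ * maxwellian 0 (1 / mj) x := by
    intro x; rw [maxwellian_shift_pt u (Tc / mj) s hTj hs x, hj2]
  have hHi : ∀ (β : Fin 3 → ℕ) (x : E3), hermiteH u (Tc / mi) β (u + s • x)
      = hermiteH 0 (1 / mi) β x := by
    intro β x; rw [hermiteH_shift u (Tc / mi) s hTi hs β x, hi2]
  have hHj : ∀ (β : Fin 3 → ℕ) (x : E3), hermiteH u (Tc / mj) β (u + s • x)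
      = hermiteH 0 (1 / mj) β x := by
    intro β x; rw [hermiteH_shift u (Tc / mj) s hTj hs β x, hj2]
  have hBpow : (s * ‖v - vs‖) ^ C = Tc ^ (C / 2) * ‖v - vs‖ ^ C := by
    rw [Real.mul_rpow hs.le (norm_nonneg _)]
    congr 1
    rw [hsdef, Real.sqrt_eq_rpow, ← Real.rpow_mul hTc.le]
    congr 1
    ring
  simp only [AGenIntegrand, vPost_shift mi mj hm hs.le, vsPost_shift mi mj hm hs.le,
    norm_shift hs.le, hBpow, hMi, hMj, hHi, hHj]
  rw [← hs2]
  field_simp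

end KeyLemma


/-- Scaling and translation invariance of the collision expansion
coefficients for power-law kernels `B(|g|, ς) = |g|^C Σ(ς)`:
`A^{ij}_{αλκ}(ū, 𝒯) = 𝒯^{C/2} A^{ij}_{αλκ}(0, 1)`. -/
theorem Acoef_translation_scaling (C : ℝ) (Sig : S2 → ℝ) (hmeas : Measurable Sig)
    (hpos : ∀ ς, 0 ≤ Sig ς) (mi mj : ℝ) (hmi : 0 < mi) (hmj : 0 < mj)
    (hInt : ∀ (u : E3) (Tc : ℝ), 0 < Tc → ∀ α lam kap : Fin 3 → ℕ,
      Integrable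
        (fun p : E3 × E3 × S2 =>
          AGenIntegrand (fun s ς => s ^ C * Sig ς) mi mj u Tc α lam kap p.1 p.2.1 p.2.2)
        (volume.prod (volume.prod sphereMeasure)))
    (u : E3) (Tc : ℝ) (hTc : 0 < Tc) (α lam kap : Fin 3 → ℕ) :
    AcoefGen (fun s ς => s ^ C * Sig ς) mi mj u Tc α lam kap =
      Tc ^ (C / 2) * AcoefGen (fun s ς => s ^ C * Sig ς) mi mj 0 1 α lam kap := by
  set B : ℝ → S2 → ℝ := fun s ς => s ^ C * Sig ς with hB
  set s := Real.sqrt Tc with hsdef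
  have hs : 0 < s := Real.sqrt_pos.mpr hTc
  have hs2 : s ^ 2 = Tc := Real.sq_sqrt hTc.le
  have key : ∀ (v vs : E3) (ς : S2),
      AGenIntegrand B mi mj u Tc α lam kap (u + s • v) (u + s • vs) ς
        = (Tc ^ (C / 2) * (Tc ^ 3)⁻¹) * AGenIntegrand B mi mj 0 1 α lam kap v vs ς :=
    fun v vs ς => AGen_shift C Sig mi mj hmi hmj u Tc hTc α lam kap v vs ς
  have e1 : (∫ v : E3, ∫ vs : E3, ∫ ς : S2,
        AGenIntegrand B mi mj u Tc α lam kap v vs ς ∂sphereMeasure)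
      = s ^ 3 • ∫ v : E3, ∫ vs : E3, ∫ ς : S2,
        AGenIntegrand B mi mj u Tc α lam kap (u + s • v) vs ς ∂sphereMeasure :=
    integral_shift _ u hs
  have e2 : ∀ v : E3, (∫ vs : E3, ∫ ς : S2,
        AGenIntegrand B mi mj u Tc α lam kap (u + s • v) vs ς ∂sphereMeasure)
      = s ^ 3 • ∫ vs : E3, ∫ ς : S2,
        AGenIntegrand B mi mj u Tc α lam kap (u + s • v) (u + s • vs) ς ∂sphereMeasure :=
    fun v => integral_shift _ u hs
  have main : (∫ v : E3, ∫ vs : E3, ∫ ς : S2,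
        AGenIntegrand B mi mj u Tc α lam kap v vs ς ∂sphereMeasure)
      = Tc ^ (C / 2) * ∫ v : E3, ∫ vs : E3, ∫ ς : S2,
        AGenIntegrand B mi mj 0 1 α lam kap v vs ς ∂sphereMeasure := by
    rw [e1]
    simp only [e2, key, MeasureTheory.integral_const_mul, MeasureTheory.integral_smul,
      smul_eq_mul]
    rw [← hs2]
    field_simp
  unfold AcoefGen
  rw [main]
  ring
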